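/- arXiv:2102.07411 — 3 statements merged into one kernel-verified Lean document; each statement's English description precedes it below -/
import Mathlib

section
/- Suppose p is odd and s = (p^m − 1)/n is odd. Then for every 1 ≤ i ≤ n the number of ordered pairs (α, β) ∈ A_i × A_i with α + β = 0 equals 0, and there exists exactly one index j with 1 ≤ j ≤ n, j ≠ i, such that the number of ordered pairs (α, β) ∈ A_i × A_j with α + β = 0 equals s; for all other indices j this number is 0. -/
/-- When `p` is odd and `s` is odd: `0` has no representation as an ordered sum of two
elements of the same fiber `A i`; there is exactly one index `j ≠ i` (with `1 ≤ j ≤ n`)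
for which `0` has exactly `s` representations as a sum of an element of `A i` and an
element of `A j`, and for all other such indices the number of representations is `0`. -/
theorem zero_representation_count_odd_case
    (p m n s : ℕ) (hp : p.Prime) (hm : 1 ≤ m)
    (F : Type*) [Field F] [Fintype F] (hF : Fintype.card F = p ^ m)
    (γ : Fˣ) (hγ : ∀ x : Fˣ, x ∈ Subgroup.zpowers γ)
    (hn : 2 ≤ n) (hdvd : n ∣ p ^ m - 1) (hs : s = (p ^ m - 1) / n)
    (A : ℕ → Set F)
    (hA : ∀ k, A k = {x : F | ∃ t : ℕ, x = ((γ ^ (k - 1) * (γ ^ n) ^ t : Fˣ) : F)})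
    (hpodd : Odd p) (hsodd : Odd s) :
    ∀ i : ℕ, 1 ≤ i → i ≤ n →
      ({q : F × F | q.1 ∈ A i ∧ q.2 ∈ A i ∧ q.1 + q.2 = 0}.ncard = 0 ∧
       (∃! j : ℕ, 1 ≤ j ∧ j ≤ n ∧ j ≠ i ∧
         {q : F × F | q.1 ∈ A i ∧ q.2 ∈ A j ∧ q.1 + q.2 = 0}.ncard = s) ∧
       (∀ j : ℕ, 1 ≤ j → j ≤ n → j ≠ i →
         {q : F × F | q.1 ∈ A i ∧ q.2 ∈ A j ∧ q.1 + q.2 = 0}.ncard ≠ s →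
         {q : F × F | q.1 ∈ A i ∧ q.2 ∈ A j ∧ q.1 + q.2 = 0}.ncard = 0)) := by
  classical
  have hq : n * s = p ^ m - 1 := by rw [hs]; exact Nat.mul_div_cancel' hdvd
  have hspos : 0 < s := hsodd.pos
  have hnpos : 0 < n := by omega
  have hcard : Fintype.card Fˣ = n * s := by rw [Fintype.card_units, hF, hq]
  have hord : orderOf γ = n * s := by
    rw [orderOf_eq_card_of_forall_mem_zpowers hγ, Nat.card_eq_fintype_card, hcard]
  have hpmodd : Odd (p ^ m) := hpodd.pow
  have heven : Even (n * s) := by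
    rw [hq]; exact Nat.Odd.sub_odd hpmodd odd_one
  obtain ⟨u, hu⟩ := hsodd
  have hneven : Even n := by
    rcases Nat.even_mul.mp heven with h1 | h1
    · exact h1
    · obtain ⟨r0, hr0⟩ := h1; omega
  obtain ⟨nh, hnh⟩ := hneven
  have hnhpos : 0 < nh := by omega
  have hnhlt : nh < n := by omega
  -- membership description of the fibers
  have hmem : ∀ k (x : F), x ∈ A k ↔ ∃ t : ℕ, x = (γ : F) ^ (k - 1 + n * t) := by
    intro k x
    rw [hA k]
    simp only [Set.mem_setOf_eq]
    have hval : ∀ t : ℕ, ((γ ^ (k - 1) * (γ ^ n) ^ t : Fˣ) : F)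
        = (γ : F) ^ (k - 1 + n * t) := by
      intro t; push_cast; rw [← pow_mul, ← pow_add]
    constructor
    · rintro ⟨t, rfl⟩; exact ⟨t, (hval t).symm ▸ rfl⟩
    · rintro ⟨t, rfl⟩; exact ⟨t, (hval t).symm⟩
  have hpow : ∀ a b : ℕ, ((γ : F) ^ a = (γ : F) ^ b ↔ a ≡ b [MOD n * s]) := by
    intro a b
    rw [← hord, ← pow_eq_pow_iff_modEq, ← Units.val_pow_eq_pow_val,
      ← Units.val_pow_eq_pow_val]
    exact ⟨fun hh => Units.ext hh, fun hh => congrArg _ hh⟩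
  have hγns : (γ : F) ^ (n * s) = 1 := by
    rw [← Units.val_pow_eq_pow_val, ← hord, pow_orderOf_eq_one, Units.val_one]
  have hneg1 : (γ : F) ^ (nh * s) = -1 := by
    have h2 : (γ : F) ^ (nh * s) * (γ : F) ^ (nh * s) = 1 := by
      rw [← pow_add]
      have he : nh * s + nh * s = n * s := by rw [hnh]; ring
      rw [he, hγns]
    rcases mul_self_eq_one_iff.mp h2 with h1 | h1
    · exfalso
      have h3 := (hpow (nh * s) 0).mp (by simpa using h1)
      have h4 : (n * s) ∣ (nh * s) := Nat.modEq_zero_iff_dvd.mp h3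
      have h6 : 0 < nh * s := Nat.mul_pos hnhpos hspos
      have h7 := Nat.le_of_dvd h6 h4
      have h5 : nh * s + s ≤ n * s := by
        have := Nat.mul_le_mul_right s (show nh + 1 ≤ n by omega)
        calc nh * s + s = (nh + 1) * s := by ring
          _ ≤ n * s := this
      omega
    · exact h1
  have hnegpow : ∀ e : ℕ, -((γ : F) ^ e) = (γ : F) ^ (nh * s + e) := by
    intro e; rw [pow_add, hneg1, neg_one_mul]
  intro i hi1 hin
  set r : ℕ := (i - 1 + nh) % n with hr
  set v : ℕ := (i - 1 + nh) / n with hv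
  have hrlt : r < n := Nat.mod_lt _ hnpos
  have hdm : n * v + r = i - 1 + nh := Nat.div_add_mod _ _
  set j0 : ℕ := r + 1 with hj0
  have hj0n : j0 ≤ n := hrlt
  have hj01 : 1 ≤ j0 := by omega
  have hshape : ∀ t : ℕ, nh * s + (i - 1 + n * t) = n * (u + t) + (i - 1 + nh) := by
    intro t
    have hns : nh * s = n * u + nh := by rw [hu, hnh]; ring
    rw [hns]; ring
  have hj0ne : j0 ≠ i := by
    intro hji
    have hr' : r = i - 1 := by omega
    have hnv : n * v = nh := by omega
    rcases Nat.eq_zero_or_pos v with hv0 | hv0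
    · rw [hv0, Nat.mul_zero] at hnv; omega
    · have : n ≤ n * v := Nat.le_mul_of_pos_right n hv0
      omega
  -- if x ∈ A i and -x ∈ A j with 1 ≤ j ≤ n, then j = j0
  have hmatch : ∀ j, 1 ≤ j → j ≤ n → ∀ x, x ∈ A i → -x ∈ A j → j = j0 := by
    intro j hj1 hjn x hx hnx
    rw [hmem] at hx hnx
    obtain ⟨t, rfl⟩ := hx
    obtain ⟨t', ht'⟩ := hnx
    rw [hnegpow] at ht'
    have hcong := (hpow _ _).mp ht'
    have hcong2 : nh * s + (i - 1 + n * t) ≡ j - 1 + n * t' [MOD n] :=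
      Nat.ModEq.of_mul_right s hcong
    have hL : (nh * s + (i - 1 + n * t)) % n = r := by
      rw [hshape t, Nat.mul_add_mod]
    have hR : (j - 1 + n * t') % n = j - 1 := by
      rw [Nat.add_comm, Nat.mul_add_mod, Nat.mod_eq_of_lt (by omega : j - 1 < n)]
    have : r = j - 1 := by rw [← hL, ← hR]; exact hcong2
    omega
  have hnegmem : ∀ x, x ∈ A i → -x ∈ A j0 := by
    intro x hx
    rw [hmem] at hx ⊢
    obtain ⟨t, rfl⟩ := hx
    refine ⟨u + t + v, ?_⟩
    rw [hnegpow]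
    congr 1
    rw [hshape t]
    have hj0r : j0 - 1 = r := by omega
    rw [hj0r, ← hdm]
    ring
  have hb : ∀ t, t < s → i - 1 + n * t < n * s := by
    intro t ht
    have h1 : i - 1 + n * t < n + n * t := Nat.add_lt_add_right (by omega) _
    have h2 : n + n * t = n * (t + 1) := by ring
    have h3 : n * (t + 1) ≤ n * s := Nat.mul_le_mul_left n (by omega)
    omega
  have hAicard : (A i).ncard = s := by
    have himg : A i = ↑((Finset.range s).image fun t => (γ : F) ^ (i - 1 + n * t)) := by
      ext x
      simp only [hmem, Finset.coe_image, Set.mem_image, Finset.mem_coe, Finset.mem_range]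
      constructor
      · rintro ⟨t, rfl⟩
        refine ⟨t % s, Nat.mod_lt _ hspos, ?_⟩
        rw [hpow]
        exact Nat.ModEq.add_left _ (Nat.ModEq.mul_left' n (Nat.mod_modEq t s))
      · rintro ⟨t, _, rfl⟩
        exact ⟨t, rfl⟩
    rw [himg, Set.ncard_coe_finset, Finset.card_image_of_injOn, Finset.card_range]
    intro t ht t' ht' hEq
    simp only [Finset.mem_coe, Finset.mem_range] at ht ht'
    have hc := (hpow _ _).mp hEq
    have hc2 : i - 1 + n * t = i - 1 + n * t' := by
      have e1 := Nat.mod_eq_of_lt (hb t ht)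
      have e2 := Nat.mod_eq_of_lt (hb t' ht')
      unfold Nat.ModEq at hc
      rw [e1, e2] at hc
      exact hc
    exact Nat.eq_of_mul_eq_mul_left hnpos (Nat.add_left_cancel hc2)
  have hkey : ∀ j, 1 ≤ j → j ≤ n →
      {q : F × F | q.1 ∈ A i ∧ q.2 ∈ A j ∧ q.1 + q.2 = 0}.ncard
        = if j = j0 then s else 0 := by
    intro j hj1 hjn
    by_cases hcase : j = j0
    · rw [if_pos hcase]
      subst hcase
      have hSeq : {q : F × F | q.1 ∈ A i ∧ q.2 ∈ A j0 ∧ q.1 + q.2 = 0}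
          = (fun x => (x, -x)) '' A i := by
        ext ⟨a, b⟩
        simp only [Set.mem_setOf_eq, Set.mem_image, Prod.mk.injEq]
        constructor
        · rintro ⟨ha, hb', hab⟩
          exact ⟨a, ha, rfl, neg_eq_of_add_eq_zero_right hab⟩
        · rintro ⟨x, hx, rfl, rfl⟩
          exact ⟨hx, hnegmem x hx, add_neg_cancel x⟩
      have hinj : Function.Injective fun x : F => (x, -x) :=
        fun a b hab => congrArg Prod.fst hab
      rw [hSeq, Set.ncard_image_of_injective _ hinj, hAicard]
    · rw [if_neg hcase]
      have hempty : {q : F × F | q.1 ∈ A i ∧ q.2 ∈ A j ∧ q.1 + q.2 = 0} = ∅ := by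
        ext ⟨a, b⟩
        simp only [Set.mem_setOf_eq, Set.mem_empty_iff_false, iff_false]
        rintro ⟨ha, hb', hab⟩
        have hba : b = -a := (neg_eq_of_add_eq_zero_right hab).symm
        subst hba
        exact hcase (hmatch j hj1 hjn a ha hb')
      rw [hempty, Set.ncard_empty]
  refine ⟨?_, ⟨j0, ⟨hj01, hj0n, hj0ne, by rw [hkey j0 hj01 hj0n, if_pos rfl]⟩, ?_⟩, ?_⟩
  · rw [hkey i hi1 hin, if_neg fun hcon => hj0ne hcon.symm]
  · rintro j ⟨hj1, hjn, hjne, hcount⟩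
    have hk := hkey j hj1 hjn
    rw [hcount] at hk
    split_ifs at hk with hjj
    · exact hjj
    · omega
  · intro j hj1 hjn hjne hne
    have hk := hkey j hj1 hjn
    split_ifs at hk with hjj
    · exact absurd hk hne
    · exact hk
end

section
/- Let p be an odd prime and set d_p = (p−1)/4 if p ≡ 1 (mod 4) and d_p = (p+1)/4 if p ≡ 3 (mod 4). Then every quadratic residue a ∈ F_p* can be written as a = x + y with x and y quadratic residues in exactly d_p − 1 ways (counting ordered pairs (x, y) of nonzero quadratic residues with x + y = a), and likewise every quadratic non-residue b ∈ F_p* can be written as b = x + y with x and y quadratic non-residues in exactly d_p − 1 ways (counting ordered pairs). -/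
/-!
Let `χ` be the quadratic character of `F_p`, `a ≠ 0` and `ε = χ a`. For `x ∉ {0, a}` the
condition `χ x = χ (a - x) = ε` has indicator `(1 + ε χ x)(1 + ε χ (a - x)) / 4`. Summed over all
of `F_p` the linear terms vanish and the quadratic term is the Jacobi sum `J(χ, χ) = -χ(-1)`;
correcting for `x = 0, a`, the number `N` of such `x` satisfies `4 N = p - 4 - χ(-1)`, and
`χ(-1) = ±1` as `p ≡ ±1 (mod 4)`.
-/

open Finset

section

variable {F : Type*} [Field F] [Fintype F]

lemma sum_mulChar_mul_apply_sub {R : Type*} [CommRing R] (χ ψ : MulChar F R) {a : F}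
    (ha : a ≠ 0) : ∑ x, χ x * ψ (a - x) = χ a * ψ a * jacobiSum χ ψ := by
  rw [jacobiSum, mul_sum, ← Equiv.sum_comp (Equiv.mulLeft₀ a ha) (fun x => χ x * ψ (a - x))]
  refine sum_congr rfl fun y _ => ?_
  rw [Equiv.mulLeft₀_apply, ← mul_one_sub, map_mul, map_mul]
  ring

variable [DecidableEq F]

lemma jacobiSum_quadraticChar_self (hF : ringChar F ≠ 2) :
    jacobiSum (quadraticChar F) (quadraticChar F) = -quadraticChar F (-1) := by
  have h := jacobiSum_nontrivial_inv (quadraticChar_ne_one hF)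
  rwa [(quadraticChar_isQuadratic F).inv] at h

lemma sum_quadraticChar_mul_apply_sub (hF : ringChar F ≠ 2) {a : F} (ha : a ≠ 0) :
    ∑ x, quadraticChar F x * quadraticChar F (a - x) = -quadraticChar F (-1) := by
  rw [sum_mulChar_mul_apply_sub _ _ ha, ← sq, quadraticChar_sq_one ha, one_mul,
    jacobiSum_quadraticChar_self hF]

lemma sum_quadraticChar_apply_sub (hF : ringChar F ≠ 2) (a : F) :
    ∑ x, quadraticChar F (a - x) = 0 := by
  rw [← quadraticChar_sum_zero hF]
  exact Fintype.sum_equiv (Equiv.subLeft a) _ _ fun _ => rfl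

lemma ite_and_eq_mul_one_add {s t ε : ℤ} (hs : s = 1 ∨ s = -1) (ht : t = 1 ∨ t = -1)
    (hε : ε = 1 ∨ ε = -1) : (if s = ε ∧ t = ε then 4 else 0) = (1 + ε * s) * (1 + ε * t) := by
  rcases hs with rfl | rfl <;> rcases ht with rfl | rfl <;> rcases hε with rfl | rfl <;> norm_num

lemma sum_one_add_mul_one_add_quadraticChar (hF : ringChar F ≠ 2) {a : F} (ha : a ≠ 0) :
    ∑ x, (1 + quadraticChar F a * quadraticChar F x) *
        (1 + quadraticChar F a * quadraticChar F (a - x))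
      = Fintype.card F - quadraticChar F (-1) := by
  have hexpand : ∀ x, (1 + quadraticChar F a * quadraticChar F x) *
        (1 + quadraticChar F a * quadraticChar F (a - x))
      = 1 + quadraticChar F a * quadraticChar F x + quadraticChar F a * quadraticChar F (a - x)
        + quadraticChar F a ^ 2 * (quadraticChar F x * quadraticChar F (a - x)) :=
    fun x => by ring
  simp only [hexpand, sum_add_distrib, ← mul_sum, quadraticChar_sum_zero hF,
    sum_quadraticChar_apply_sub hF, sum_quadraticChar_mul_apply_sub hF ha,
    quadraticChar_sq_one ha, sum_const, card_univ, nsmul_one]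
  ring

theorem four_mul_card_filter_quadraticChar_eq (hF : ringChar F ≠ 2) {a : F} (ha : a ≠ 0) :
    4 * (#{x | quadraticChar F x = quadraticChar F a ∧
        quadraticChar F (a - x) = quadraticChar F a} : ℤ)
      = Fintype.card F - 4 - quadraticChar F (-1) := by
  set χ := quadraticChar F
  set ε := χ a
  have hε : ε = 1 ∨ ε = -1 := quadraticChar_dichotomy ha
  have hχ0 : χ 0 = 0 := quadraticChar_zero
  have hε0 : ε ≠ 0 := by rcases hε with h | h <;> simp [h]
  set S := univ \ {0, a}
  have hS : ∀ x ∈ S, x ≠ 0 ∧ a - x ≠ 0 := by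
    intro x hx
    simp only [S, mem_sdiff, mem_univ, mem_insert, mem_singleton, true_and, not_or] at hx
    exact ⟨hx.1, sub_ne_zero.2 (Ne.symm hx.2)⟩
  have hvanish : ∀ x ∈ univ, x ∉ S → (if χ x = ε ∧ χ (a - x) = ε then (4 : ℤ) else 0) = 0 := by
    intro x _ hx
    have hx : x = 0 ∨ a - x = 0 := by
      simpa [S, sub_eq_zero, eq_comm, or_iff_not_imp_left] using hx
    refine if_neg fun h => hε0 ?_
    rcases hx with hx | hx
    · rw [← h.1, hx, hχ0]
    · rw [← h.2, hx, hχ0]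
  calc 4 * (#{x | χ x = ε ∧ χ (a - x) = ε} : ℤ)
      = ∑ x, if χ x = ε ∧ χ (a - x) = ε then 4 else 0 := by
        rw [sum_ite, sum_const_zero, add_zero, sum_const, nsmul_eq_mul, mul_comm]
    _ = ∑ x ∈ S, if χ x = ε ∧ χ (a - x) = ε then 4 else 0 :=
        (sum_subset (subset_univ S) hvanish).symm
    _ = ∑ x ∈ S, (1 + ε * χ x) * (1 + ε * χ (a - x)) :=
        sum_congr rfl fun x hx => ite_and_eq_mul_one_add (quadraticChar_dichotomy (hS x hx).1)
          (quadraticChar_dichotomy (hS x hx).2) hε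
    _ = Fintype.card F - 4 - χ (-1) := by
        have hε2 : ε * ε = 1 := by rw [← sq]; exact quadraticChar_sq_one ha
        rw [sum_sdiff_eq_sub (subset_univ _), sum_one_add_mul_one_add_quadraticChar hF ha,
          sum_pair (Ne.symm ha), sub_zero, sub_self, hχ0]
        linear_combination -2 * hε2

lemma quadraticChar_eq_one_iff_ne_zero_and_isSquare {x : F} :
    quadraticChar F x = 1 ↔ x ≠ 0 ∧ IsSquare x := by
  by_cases hx : x = 0
  · simp [hx]
  · rw [quadraticChar_one_iff_isSquare hx]
    exact (and_iff_right hx).symm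

lemma quadraticChar_eq_neg_one_iff_ne_zero_and_not_isSquare {x : F} :
    quadraticChar F x = -1 ↔ x ≠ 0 ∧ ¬IsSquare x := by
  rw [quadraticChar_neg_one_iff_not_isSquare]
  exact ⟨fun h => ⟨by rintro rfl; exact h .zero, h⟩, And.right⟩

end

lemma Set.ncard_setOf_add_eq {G : Type*} [AddCommGroup G] [Fintype G] (P : G → Prop)
    [DecidablePred P] (a : G) :
    {q : G × G | P q.1 ∧ P q.2 ∧ q.1 + q.2 = a}.ncard = #{x | P x ∧ P (a - x)} := by
  have h : {q : G × G | P q.1 ∧ P q.2 ∧ q.1 + q.2 = a}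
      = (fun x => (x, a - x)) '' ↑({x | P x ∧ P (a - x)} : Finset G) := by
    ext ⟨x, y⟩
    simp only [Set.mem_ofPred_eq, coe_filter, Finset.mem_univ, true_and, Set.mem_image,
      Prod.mk.injEq]
    constructor
    · rintro ⟨hx, hy, rfl⟩
      exact ⟨x, ⟨hx, by rwa [add_sub_cancel_left]⟩, rfl, add_sub_cancel_left x y⟩
    · rintro ⟨x, ⟨hx, hy⟩, rfl, rfl⟩
      exact ⟨hx, hy, add_sub_cancel x a⟩
  rw [h, Set.ncard_image_of_injective _ fun x y h => (Prod.ext_iff.1 h).1, Set.ncard_coe_finset]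

/-- Perron: with `d_p = (p-1)/4` if `p ≡ 1 (mod 4)` and `d_p = (p+1)/4` if
`p ≡ 3 (mod 4)`, every quadratic residue is a sum of two quadratic residues in exactly
`d_p - 1` (ordered) ways, and every non-residue is a sum of two non-residues in exactly
`d_p - 1` (ordered) ways. -/
theorem perron_same_class_counts
    (p : ℕ) (hp : p.Prime) (hpodd : Odd p)
    (d : ℕ)
    (hd1 : p % 4 = 1 → d = (p - 1) / 4)
    (hd3 : p % 4 = 3 → d = (p + 1) / 4) :
    (∀ a : ZMod p, a ≠ 0 → IsSquare a →
      {q : ZMod p × ZMod p |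
        (q.1 ≠ 0 ∧ IsSquare q.1) ∧ (q.2 ≠ 0 ∧ IsSquare q.2) ∧ q.1 + q.2 = a}.ncard
        = d - 1) ∧
    (∀ b : ZMod p, b ≠ 0 → ¬ IsSquare b →
      {q : ZMod p × ZMod p |
        (q.1 ≠ 0 ∧ ¬ IsSquare q.1) ∧ (q.2 ≠ 0 ∧ ¬ IsSquare q.2) ∧ q.1 + q.2 = b}.ncard
        = d - 1) := by
  have : Fact p.Prime := ⟨hp⟩
  have hF : ringChar (ZMod p) ≠ 2 := by
    rw [ZMod.ringChar_zmod_n]; rintro rfl; exact Nat.not_even_iff_odd.2 hpodd even_two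
  have count (a : ZMod p) (ha : a ≠ 0) :
      {q : ZMod p × ZMod p | quadraticChar _ q.1 = quadraticChar _ a ∧
        quadraticChar _ q.2 = quadraticChar _ a ∧ q.1 + q.2 = a}.ncard = d - 1 := by
    have h := four_mul_card_filter_quadraticChar_eq hF ha
    rw [quadraticChar_neg_one hF, ZMod.card] at h
    rw [Set.ncard_setOf_add_eq (fun x => quadraticChar _ x = quadraticChar _ a)]
    rcases Nat.odd_mod_four_iff.1 (Nat.odd_iff.1 hpodd) with h4 | h4
    · rw [ZMod.χ₄_nat_one_mod_four h4] at h; have := hd1 h4; omega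
    · rw [ZMod.χ₄_nat_three_mod_four h4] at h; have := hd3 h4; omega
  refine ⟨fun a ha hsq => ?_, fun b hb hnsq => ?_⟩
  · rw [← count a ha, (quadraticChar_one_iff_isSquare ha).2 hsq]
    simp only [quadraticChar_eq_one_iff_ne_zero_and_isSquare]
  · rw [← count b hb, quadraticChar_neg_one_iff_not_isSquare.2 hnsq]
    simp only [quadraticChar_eq_neg_one_iff_ne_zero_and_not_isSquare]
end

section
/- Let p be an odd prime and set d_p = (p−1)/4 if p ≡ 1 (mod 4) and d_p = (p+1)/4 if p ≡ 3 (mod 4). Then every quadratic residue a ∈ F_p* can be written as a = x + y with x and y quadratic non-residues in exactly d_p ways (counting ordered pairs (x, y) of quadratic non-residues with x + y = a), and likewise every quadratic non-residue b ∈ F_p* can be written as b = x + y with x and y quadratic residues in exactly d_p ways (counting ordered pairs). -/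
open Finset

section aux

variable (p : ℕ) [Fact p.Prime]

private lemma perron_jac (hp2 : p ≠ 2) (a : ZMod p) (ha : a ≠ 0) :
    ∑ x : ZMod p, quadraticChar (ZMod p) x * quadraticChar (ZMod p) (a - x)
      = - quadraticChar (ZMod p) (-1) := by
  set χ := quadraticChar (ZMod p) with hχdef
  have hc : ringChar (ZMod p) ≠ 2 := by
    rw [ZMod.ringChar_zmod_n]; exact hp2
  have h1 : ∑ x : ZMod p, χ x * χ (a - x) = ∑ x : ZMod p, χ x * χ (1 - x) := by
    have hb : Function.Bijective (fun x : ZMod p => a * x) :=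
      (Equiv.mulLeft₀ a ha).bijective
    rw [← Fintype.sum_bijective _ hb (fun x => χ x * χ (1 - x))
        (fun x => χ x * χ (a - x)) ?_]
    intro x
    show χ x * χ (1 - x) = χ (a * x) * χ (a - a * x)
    have : a - a * x = a * (1 - x) := by ring
    rw [this, map_mul, map_mul]
    have hsq : χ a * χ a = 1 := by
      have := quadraticChar_sq_one ha
      rwa [sq] at this
    linear_combination (-(χ x * χ (1 - x))) * hsq
  have h2 : ∑ x : ZMod p, χ x * χ (1 - x) = jacobiSum χ χ := rfl
  rw [h1, h2]
  exact (congrArg (jacobiSum χ) ((quadraticChar_isQuadratic (ZMod p)).inv).symm).trans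
    (jacobiSum_nontrivial_inv (quadraticChar_ne_one hc))

private lemma perron_count (hp2 : p ≠ 2) (a : ZMod p) (ha : a ≠ 0) (ε : ℤ)
    (hε : ε * ε = 1) (hεa : quadraticChar (ZMod p) a = -ε) :
    (4 : ℤ) * ((univ.filter fun x : ZMod p =>
        quadraticChar (ZMod p) x = ε ∧ quadraticChar (ZMod p) (a - x) = ε)).card
      = (p : ℤ) - quadraticChar (ZMod p) (-1) := by
  classical
  set χ := quadraticChar (ZMod p) with hχdef
  have hεne : ε ≠ 0 := by rintro rfl; simp at hε
  have hε' : ε = 1 ∨ ε = -1 := mul_self_eq_one_iff.mp hε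
  set T : Finset (ZMod p) :=
    univ.filter fun x : ZMod p => χ x = ε ∧ χ (a - x) = ε with hT
  set s : Finset (ZMod p) := univ \ {0, a} with hs
  have hTs : T ⊆ s := by
    intro x hx
    rw [hT, mem_filter] at hx
    obtain ⟨-, h1, h2⟩ := hx
    rw [hs, mem_sdiff]
    refine ⟨mem_univ x, ?_⟩
    simp only [mem_insert, mem_singleton]
    rintro (rfl | rfl)
    · rw [quadraticChar_zero] at h1; exact hεne h1.symm
    · rw [sub_self, quadraticChar_zero] at h2; exact hεne h2.symm
  have hdich : ∀ x : ZMod p, x ≠ 0 → χ x ≠ ε → 1 + ε * χ x = 0 := by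
    intro x hx hne
    rcases quadraticChar_dichotomy hx with h | h
    · rcases hε' with rfl | rfl
      · exact absurd h hne
      · rw [h]; ring
    · rcases hε' with rfl | rfl
      · rw [h]; ring
      · exact absurd h hne
  have key : ∑ x ∈ s, (1 + ε * χ x) * (1 + ε * χ (a - x)) = 4 * (T.card : ℤ) := by
    rw [← Finset.sum_subset hTs ?_]
    · calc ∑ x ∈ T, (1 + ε * χ x) * (1 + ε * χ (a - x))
          = ∑ _x ∈ T, (4 : ℤ) := by
            apply Finset.sum_congr rfl
            intro x hx
            rw [hT, mem_filter] at hx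
            obtain ⟨-, h1, h2⟩ := hx
            rw [h1, h2]
            linear_combination (3 + ε * ε) * hε
        _ = 4 * (T.card : ℤ) := by
            rw [Finset.sum_const, nsmul_eq_mul, mul_comm]
    · intro x hxs hxT
      rw [hT, mem_filter] at hxT
      push_neg at hxT
      rw [hs, mem_sdiff] at hxs
      simp only [mem_insert, mem_singleton] at hxs
      push_neg at hxs
      obtain ⟨-, hx0, hxa⟩ := hxs
      by_cases h1 : χ x = ε
      · have h2 := hxT (mem_univ x) h1
        have : a - x ≠ 0 := sub_ne_zero.mpr (Ne.symm hxa)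
        rw [hdich _ this h2, mul_zero]
      · rw [hdich _ hx0 h1, zero_mul]
  have hcard_s : (s.card : ℤ) = (p : ℤ) - 2 := by
    have h0a : (0 : ZMod p) ≠ a := Ne.symm ha
    have : s.card = Fintype.card (ZMod p) - 2 := by
      rw [hs, Finset.card_sdiff_of_subset (subset_univ _), card_univ, card_insert_of_notMem
        (by simpa using h0a), card_singleton]
    rw [this, ZMod.card]
    have hp2' : 2 ≤ p := (Fact.out : p.Prime).two_le
    push_cast [Nat.cast_sub hp2']
    ring
  have hsum1 : ∑ x ∈ s, χ x = - χ a := by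
    have htot : ∑ x ∈ s, χ x + ∑ x ∈ ({0, a} : Finset (ZMod p)), χ x
        = ∑ x : ZMod p, χ x := Finset.sum_sdiff (subset_univ _)
    rw [quadraticChar_sum_zero (by rw [ZMod.ringChar_zmod_n]; exact hp2),
      Finset.sum_pair (Ne.symm ha), quadraticChar_zero, zero_add] at htot
    linarith
  have hsum2 : ∑ x ∈ s, χ (a - x) = - χ a := by
    have htot : ∑ x ∈ s, χ (a - x) + ∑ x ∈ ({0, a} : Finset (ZMod p)), χ (a - x)
        = ∑ x : ZMod p, χ (a - x) := Finset.sum_sdiff (subset_univ _)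
    have hfull : ∑ x : ZMod p, χ (a - x) = ∑ x : ZMod p, χ x := by
      have hb : Function.Bijective (fun x : ZMod p => a - x) := by
        have : Function.Involutive (fun x : ZMod p => a - x) := fun x => by ring
        exact this.bijective
      exact Fintype.sum_bijective _ hb _ _ (fun x => rfl)
    rw [hfull, quadraticChar_sum_zero (by rw [ZMod.ringChar_zmod_n]; exact hp2),
      Finset.sum_pair (Ne.symm ha), sub_zero, sub_self, quadraticChar_zero,
      add_zero] at htot
    linarith
  have hsum3 : ∑ x ∈ s, χ x * χ (a - x) = - χ (-1) := by
    rw [← perron_jac p hp2 a ha]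
    apply Finset.sum_subset (subset_univ s)
    intro x _ hxs
    rw [hs, mem_sdiff] at hxs
    simp only [mem_univ, true_and, not_not, mem_insert, mem_singleton] at hxs
    rcases hxs with rfl | rfl
    · rw [quadraticChar_zero, zero_mul]
    · rw [sub_self, quadraticChar_zero, mul_zero]
  have expand : ∑ x ∈ s, (1 + ε * χ x) * (1 + ε * χ (a - x))
      = (s.card : ℤ) + ε * (∑ x ∈ s, χ x) + ε * (∑ x ∈ s, χ (a - x))
        + ε * ε * (∑ x ∈ s, χ x * χ (a - x)) := by
    have hterm : ∀ x ∈ s, (1 + ε * χ x) * (1 + ε * χ (a - x))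
        = 1 + ε * χ x + ε * χ (a - x) + ε * ε * (χ x * χ (a - x)) := by
      intro x _
      ring
    rw [Finset.sum_congr rfl hterm, Finset.sum_add_distrib, Finset.sum_add_distrib,
      Finset.sum_add_distrib, Finset.sum_const, ← Finset.mul_sum, ← Finset.mul_sum,
      ← Finset.mul_sum, nsmul_eq_mul, mul_one]
  rw [expand, hcard_s, hsum1, hsum2, hsum3, hεa, hε] at key
  rw [← key]
  linear_combination 2 * hε

end aux

/-- Perron: with `d_p = (p-1)/4` if `p ≡ 1 (mod 4)` and `d_p = (p+1)/4` if
`p ≡ 3 (mod 4)`, every quadratic residue is a sum of two quadratic non-residues in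
exactly `d_p` (ordered) ways, and every non-residue is a sum of two quadratic residues
in exactly `d_p` (ordered) ways. -/
theorem perron_opposite_class_counts
    (p : ℕ) (hp : p.Prime) (hpodd : Odd p)
    (d : ℕ)
    (hd1 : p % 4 = 1 → d = (p - 1) / 4)
    (hd3 : p % 4 = 3 → d = (p + 1) / 4) :
    (∀ a : ZMod p, a ≠ 0 → IsSquare a →
      {q : ZMod p × ZMod p |
        (q.1 ≠ 0 ∧ ¬ IsSquare q.1) ∧ (q.2 ≠ 0 ∧ ¬ IsSquare q.2) ∧ q.1 + q.2 = a}.ncard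
        = d) ∧
    (∀ b : ZMod p, b ≠ 0 → ¬ IsSquare b →
      {q : ZMod p × ZMod p |
        (q.1 ≠ 0 ∧ IsSquare q.1) ∧ (q.2 ≠ 0 ∧ IsSquare q.2) ∧ q.1 + q.2 = b}.ncard
        = d) := by
  classical
  haveI : Fact p.Prime := ⟨hp⟩
  set χ := quadraticChar (ZMod p) with hχdef
  have hp2 : p ≠ 2 := by
    rintro rfl
    exact (Nat.not_odd_iff_even.mpr (by norm_num)) hpodd
  have hpm2 : p % 2 = 1 := Nat.odd_iff.mp hpodd
  have hp4 : p % 4 = 1 ∨ p % 4 = 3 := by omega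
  -- the value of χ(-1)
  have hχm1 : (p % 4 = 1 → χ (-1) = 1) ∧ (p % 4 = 3 → χ (-1) = -1) := by
    constructor
    · intro h4
      have hsq : IsSquare (-1 : ZMod p) := (ZMod.exists_sq_eq_neg_one_iff).mpr (by omega)
      have hne : (-1 : ZMod p) ≠ 0 := by
        simp only [ne_eq, neg_eq_zero]
        exact one_ne_zero
      exact (quadraticChar_one_iff_isSquare hne).mpr hsq
    · intro h4
      have hsq : ¬ IsSquare (-1 : ZMod p) := by
        rw [ZMod.exists_sq_eq_neg_one_iff]; omega
      exact quadraticChar_neg_one_iff_not_isSquare.mpr hsq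
  -- generic step: from the integer count to the natural number count
  have main : ∀ (a : ZMod p) (ε : ℤ), a ≠ 0 → ε * ε = 1 → χ a = -ε →
      (Finset.univ.filter fun x : ZMod p => χ x = ε ∧ χ (a - x) = ε).card = d := by
    intro a ε ha hε hεa
    have hint := perron_count p hp2 a ha ε hε hεa
    rw [← hχdef] at hint
    rcases hp4 with h4 | h4
    · rw [hχm1.1 h4] at hint
      rw [hd1 h4]
      omega
    · rw [hχm1.2 h4] at hint
      rw [hd3 h4]
      omega
  have hinj : ∀ a : ZMod p, Function.Injective (fun x : ZMod p => (x, a - x)) := by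
    intro a x y h
    exact congrArg Prod.fst h
  have keyN : ∀ z : ZMod p, (z ≠ 0 ∧ ¬ IsSquare z) ↔ χ z = -1 := by
    intro z
    constructor
    · intro h
      exact quadraticChar_neg_one_iff_not_isSquare.mpr h.2
    · intro h
      have hz : z ≠ 0 := by
        rintro rfl
        rw [hχdef, quadraticChar_zero] at h
        norm_num at h
      exact ⟨hz, quadraticChar_neg_one_iff_not_isSquare.mp h⟩
  have keyS : ∀ z : ZMod p, (z ≠ 0 ∧ IsSquare z) ↔ χ z = 1 := by
    intro z
    constructor
    · intro h
      exact (quadraticChar_one_iff_isSquare h.1).mpr h.2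
    · intro h
      have hz : z ≠ 0 := by
        rintro rfl
        rw [hχdef, quadraticChar_zero] at h
        norm_num at h
      exact ⟨hz, (quadraticChar_one_iff_isSquare hz).mp h⟩
  constructor
  · intro a ha hsq
    have hεa : χ a = -(-1 : ℤ) := by
      rw [neg_neg]
      exact (keyS a).mp ⟨ha, hsq⟩
    have hset : {q : ZMod p × ZMod p |
        (q.1 ≠ 0 ∧ ¬ IsSquare q.1) ∧ (q.2 ≠ 0 ∧ ¬ IsSquare q.2) ∧ q.1 + q.2 = a}
        = ↑((Finset.univ.filter fun x : ZMod p =>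
            χ x = -1 ∧ χ (a - x) = -1).image (fun x : ZMod p => (x, a - x))) := by
      ext ⟨x, y⟩
      simp only [Set.mem_setOf_eq, Finset.coe_image, Set.mem_image, Finset.mem_coe,
        Finset.mem_filter, Finset.mem_univ, true_and, keyN, Prod.mk.injEq]
      constructor
      · rintro ⟨h1, h2, h3⟩
        refine ⟨x, ⟨h1, ?_⟩, rfl, ?_⟩ <;>
          [skip; skip] <;> first
          | (rw [show a - x = y by linear_combination h3.symm]; exact h2)
          | (linear_combination -h3)
      · rintro ⟨t, ⟨h1, h2⟩, rfl, rfl⟩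
        exact ⟨h1, h2, by ring⟩
    rw [hset, Set.ncard_coe_finset,
      Finset.card_image_of_injective _ (hinj a)]
    exact main a (-1) ha (by norm_num) hεa
  · intro b hb hnsq
    have hεb : χ b = -(1 : ℤ) := (keyN b).mp ⟨hb, hnsq⟩
    have hset : {q : ZMod p × ZMod p |
        (q.1 ≠ 0 ∧ IsSquare q.1) ∧ (q.2 ≠ 0 ∧ IsSquare q.2) ∧ q.1 + q.2 = b}
        = ↑((Finset.univ.filter fun x : ZMod p =>
            χ x = 1 ∧ χ (b - x) = 1).image (fun x : ZMod p => (x, b - x))) := by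
      ext ⟨x, y⟩
      simp only [Set.mem_setOf_eq, Finset.coe_image, Set.mem_image, Finset.mem_coe,
        Finset.mem_filter, Finset.mem_univ, true_and, keyS, Prod.mk.injEq]
      constructor
      · rintro ⟨h1, h2, h3⟩
        refine ⟨x, ⟨h1, ?_⟩, rfl, ?_⟩ <;> first
          | (rw [show b - x = y by linear_combination h3.symm]; exact h2)
          | (linear_combination -h3)
      · rintro ⟨t, ⟨h1, h2⟩, rfl, rfl⟩
        exact ⟨h1, h2, by ring⟩
    rw [hset, Set.ncard_coe_finset,
      Finset.card_image_of_injective _ (hinj b)]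
    exact main b 1 hb (by norm_num) hεb
end
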